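/- arXiv:2304.10230 — 3 statements merged into one kernel-verified Lean document; each statement's English description precedes it below -/
import Mathlib

section
/- For any nonempty reduced word w in a free group F and any nonzero integer s, the root of w^s equals root(w) if s > 0 and root(w)^{-1} if s < 0, and exp(w^s) = |s| · exp(w). -/
/-!
If `u ^ m = v ^ r` in a free group with `m, r ≠ 0`, then `u` and `v` are powers of a common
element: the reduced word of `x ^ k` is `C · Rᵏ · C⁻¹` with `R` the cyclic core of `x`, so
comparing `k = m` and `k = 2m` gives equal conjugators and `Rᵤᵐ = Rᵥʳ` in the free monoid. There
`xᵐ = yʳ` makes both `x y` and `y x` prefixes of `xᵐ xᵐ`, so `x` and `y` commute, and commuting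
words are powers of a common word by the Euclidean algorithm on lengths.

Now if `wⁿ = vʳ` with `w = uᵉ`, write `u = zᵖ`, `v = z^q`; maximality of `e` forces `p = 1`,
and torsion-freeness gives `n e = q r ≥ r`. Negative exponents reduce to `w⁻¹ = (u⁻¹)ᵉ`.
-/

/-- In a group, `u` is the root and `e` the exponent of `w`:
`w = u ^ e` with `e ≥ 1` maximal among all ways of writing `w` as a power. -/
def IsRootExp {G : Type} [Group G] (w u : G) (e : ℕ) : Prop :=
  1 ≤ e ∧ w = u ^ e ∧ ∀ (v : G) (r : ℕ), w = v ^ r → r ≤ e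

namespace FreeMonoid

variable {β : Type*}

theorem toList_pow (x : FreeMonoid β) (n : ℕ) :
    (x ^ n).toList = (List.replicate n x.toList).flatten := by
  rw [← List.prod_replicate, toList_prod, List.map_replicate]

theorem length_pow (x : FreeMonoid β) (n : ℕ) : (x ^ n).length = n * x.length := by
  simp [length, toList_pow]

theorem exists_eq_mul_of_mul_eq_mul {a b c d : FreeMonoid β} (h : a * b = c * d)
    (hle : a.length ≤ c.length) : ∃ t, c = a * t := by
  obtain ⟨t, ht⟩ := List.prefix_of_prefix_length_le (List.prefix_append a.toList b.toList)
    (by rw [← toList_mul, h]; exact List.prefix_append c.toList d.toList) hle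
  exact ⟨ofList t, ht.symm⟩

theorem eq_of_mul_eq_mul_of_length_eq {a b c d : FreeMonoid β} (h : a * b = c * d)
    (hl : a.length = c.length) : a = c :=
  (List.append_inj h hl).1

theorem exists_eq_pow_of_commute {x y : FreeMonoid β} (h : Commute x y) :
    ∃ z : FreeMonoid β, ∃ i j : ℕ, x = z ^ i ∧ y = z ^ j := by
  induction hn : x.length + y.length using Nat.strong_induction_on generalizing x y with
  | _ n ih =>
  wlog hle : x.length ≤ y.length generalizing x y
  · obtain ⟨z, i, j, hx, hy⟩ := this h.symm (by omega) (by omega)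
    exact ⟨z, j, i, hy, hx⟩
  obtain rfl | hx := eq_or_ne x 1
  · exact ⟨y, 0, 1, by simp, by simp⟩
  obtain ⟨t, rfl⟩ := exists_eq_mul_of_mul_eq_mul h.eq hle
  have hxt : Commute x t := mul_left_cancel (a := x) (by simpa only [mul_assoc] using h.eq)
  have hlt : x.length + t.length < n := by
    have : x.length ≠ 0 := mt length_eq_zero.mp hx
    rw [← hn, length_mul]; omega
  obtain ⟨z, i, j, rfl, rfl⟩ := ih _ hlt hxt rfl
  exact ⟨z, i, i + j, rfl, (pow_add z i j).symm⟩

theorem commute_of_pow_eq_pow {x y : FreeMonoid β} {m r : ℕ} (hm : m ≠ 0) (hr : r ≠ 0)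
    (h : x ^ m = y ^ r) : Commute x y := by
  generalize hy : y ^ r = w at h
  have hxw : Commute x w := h ▸ Commute.self_pow x m
  have hyw : Commute y w := hy ▸ Commute.self_pow y r
  -- `x * y` and `y * x` are both prefixes of `w * w`
  have hxy : x * y * (y ^ (r - 1) * w) = w * w * x := by
    rw [mul_assoc, ← mul_assoc y, ← pow_succ', Nat.sub_add_cancel (by omega), hy, ← mul_assoc,
      hxw.eq, mul_assoc, hxw.eq, mul_assoc]
  have hyx : y * x * (x ^ (m - 1) * w) = w * w * y := by
    rw [mul_assoc, ← mul_assoc x, ← pow_succ', Nat.sub_add_cancel (by omega), h, ← mul_assoc,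
      hyw.eq, mul_assoc, hyw.eq, mul_assoc]
  have hxl : x.length ≤ w.length := by
    rw [← h, length_pow]; exact Nat.le_mul_of_pos_left _ (by omega)
  have hyl : y.length ≤ w.length := by
    rw [← hy, length_pow]; exact Nat.le_mul_of_pos_left _ (by omega)
  obtain ⟨t₁, ht₁⟩ := exists_eq_mul_of_mul_eq_mul hxy (by simp only [length_mul]; omega)
  obtain ⟨t₂, ht₂⟩ := exists_eq_mul_of_mul_eq_mul hyx (by simp only [length_mul]; omega)
  exact eq_of_mul_eq_mul_of_length_eq (ht₁.symm.trans ht₂) (by simp only [length_mul]; omega)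

theorem exists_eq_pow_of_pow_eq_pow {x y : FreeMonoid β} {m r : ℕ} (hm : m ≠ 0) (hr : r ≠ 0)
    (h : x ^ m = y ^ r) : ∃ z : FreeMonoid β, ∃ i j : ℕ, x = z ^ i ∧ y = z ^ j :=
  exists_eq_pow_of_commute (commute_of_pow_eq_pow hm hr h)

end FreeMonoid

namespace FreeGroup

open reduceCyclically

variable {α : Type*}

theorem mk_toList_pow (T : FreeMonoid (α × Bool)) (n : ℕ) :
    mk (T ^ n).toList = mk T.toList ^ n := by
  rw [pow_mk, FreeMonoid.toList_pow]

section DecidableEq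

variable [DecidableEq α]

theorem conj_mk_reduceCyclically (x : FreeGroup α) :
    mk (conjugator x.toWord) * mk (reduceCyclically x.toWord) * (mk (conjugator x.toWord))⁻¹ =
      x := by
  rw [inv_mk, mul_mk, mul_mk, conj_conjugator_reduceCyclically, mk_toWord]

theorem toWord_pow_of_ne_zero (x : FreeGroup α) {n : ℕ} (hn : n ≠ 0) :
    (x ^ n).toWord = conjugator x.toWord ++
      (FreeMonoid.ofList (reduceCyclically x.toWord) ^ n).toList ++
      invRev (conjugator x.toWord) := by
  rw [toWord_pow, reduce_flatten_replicate isReduced_toWord, if_neg hn, FreeMonoid.toList_pow]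
  rfl

end DecidableEq

theorem exists_eq_pow_of_pow_eq_pow {u v : FreeGroup α} {m r : ℕ} (hm : m ≠ 0) (hr : r ≠ 0)
    (h : u ^ m = v ^ r) : ∃ z : FreeGroup α, ∃ p q : ℕ, u = z ^ p ∧ v = z ^ q := by
  classical
  have hw₁ := congrArg toWord h
  have hw₂ := congrArg toWord (show u ^ (2 * m) = v ^ (2 * r) by rw [pow_mul', h, ← pow_mul'])
  rw [toWord_pow_of_ne_zero u hm, toWord_pow_of_ne_zero v hr] at hw₁
  rw [toWord_pow_of_ne_zero u (by omega), toWord_pow_of_ne_zero v (by omega)] at hw₂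
  -- comparing lengths at the exponents `m` and `2 * m` isolates the conjugators
  have hC : (conjugator u.toWord).length = (conjugator v.toWord).length := by
    have l₁ := congrArg List.length hw₁
    have l₂ := congrArg List.length hw₂
    simp only [FreeMonoid.toList_pow, List.length_append, List.length_flatten,
      List.map_replicate, List.sum_replicate, smul_eq_mul, invRev_length, mul_assoc] at l₁ l₂
    omega
  rw [List.append_assoc, List.append_assoc] at hw₁
  obtain ⟨hCuv, hw⟩ := List.append_inj hw₁ hC
  obtain ⟨T, p, q, hp, hq⟩ := FreeMonoid.exists_eq_pow_of_pow_eq_pow hm hr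
    (List.append_inj_left' hw (by rw [hCuv]))
  refine ⟨mk (conjugator u.toWord) * mk T.toList * (mk (conjugator u.toWord))⁻¹, p, q, ?_, ?_⟩
  · rw [conj_pow, ← mk_toList_pow, ← hp]
    exact (conj_mk_reduceCyclically u).symm
  · rw [conj_pow, ← mk_toList_pow, ← hq, hCuv]
    exact (conj_mk_reduceCyclically v).symm

end FreeGroup

namespace IsRootExp

section Group

variable {G : Type} [Group G] {w u : G} {e : ℕ}

theorem root_ne_one (h : IsRootExp w u e) : u ≠ 1 := by
  rintro rfl
  have := h.2.2 1 (e + 1) (by rw [h.2.1, one_pow, one_pow])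
  omega

theorem inv (h : IsRootExp w u e) : IsRootExp w⁻¹ u⁻¹ e :=
  ⟨h.1, by rw [h.2.1, inv_pow], fun v r hv => h.2.2 v⁻¹ r (by rw [inv_pow, ← hv, inv_inv])⟩

end Group

theorem pow {α : Type} {w u : FreeGroup α} {e : ℕ} (h : IsRootExp w u e) {n : ℕ} (hn : n ≠ 0) :
    IsRootExp (w ^ n) u (n * e) := by
  have hu := h.root_ne_one
  obtain ⟨he, rfl, hmax⟩ := h
  refine ⟨Nat.mul_pos (by omega) he, by rw [← pow_mul, mul_comm], fun v r hv => ?_⟩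
  obtain rfl | hr := eq_or_ne r 0
  · exact Nat.zero_le _
  obtain ⟨z, p, q, rfl, rfl⟩ := FreeGroup.exists_eq_pow_of_pow_eq_pow (m := e * n)
    (by positivity) hr (by rw [pow_mul, hv])
  have hp : p = 1 := by
    have hp₀ : p ≠ 0 := by rintro rfl; exact hu (pow_zero z)
    have hpe : p * e ≤ 1 * e := by simpa using hmax z (p * e) (pow_mul z p e).symm
    have := Nat.le_of_mul_le_mul_right hpe he
    omega
  subst hp
  rw [pow_one] at hu
  rw [pow_one, ← pow_mul, ← pow_mul, IsMulTorsionFree.pow_right_inj hu] at hv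
  have hq : q ≠ 0 := by
    rintro rfl
    simp only [zero_mul, mul_eq_zero] at hv
    omega
  calc r ≤ q * r := Nat.le_mul_of_pos_left r (Nat.pos_of_ne_zero hq)
    _ = n * e := by rw [← hv, mul_comm]

end IsRootExp

theorem root_exp_of_zpow_general (α : Type) (w u : FreeGroup α) (e : ℕ) (s : ℤ)
    (h : IsRootExp w u e) (hs : s ≠ 0) :
    IsRootExp (w ^ s) (if 0 < s then u else u⁻¹) (s.natAbs * e) := by
  obtain ⟨n, rfl | rfl⟩ := Int.eq_nat_or_neg s
  · rw [if_pos (by omega), zpow_natCast, Int.natAbs_natCast]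
    exact h.pow (by omega)
  · rw [if_neg (by omega), zpow_neg, zpow_natCast, Int.natAbs_neg, Int.natAbs_natCast, ← inv_pow]
    exact h.inv.pow (by omega)

theorem root_exp_of_zpow (α : Type) (w u : FreeGroup α) (e : ℕ) (s : ℤ)
    (hw : w ≠ 1) (h : IsRootExp w u e) (hs : s ≠ 0) :
    IsRootExp (w ^ s) (if 0 < s then u else u⁻¹) (s.natAbs * e) :=
  root_exp_of_zpow_general α w u e s h hs
end

section
/- Every free group is residually V for every nontrivial extension-closed pseudovariety V of finite groups; in particular, every free group is residually a finite p-group for each prime p. -/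
/-!
Write a nontrivial element of a free group in syllable form `x₁ ^ e₁ ⋯ xₙ ^ eₙ` with
`xᵢ ≠ xᵢ₊₁` and `eᵢ ≠ 0`. Send each generator `x` to `1 + N_x` in `(n + 1) × (n + 1)` matrices over
`ZMod (p ^ k)`, where `N_x` has a `1` at position `(i - 1, i)` whenever `xᵢ = x`. Consecutive
letters differ, so `N_x ^ 2 = 0` and `x ^ e ↦ 1 + e • N_x`; the corner entry `(0, n)` of the image
of the word is then `e₁ ⋯ eₙ`, nonzero as soon as `p ^ k ∤ e₁ ⋯ eₙ`. The image consists of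
unitriangular matrices over a ring of characteristic `p ^ k`, so it is a `p`-group.

A nontrivial member of `V` has order divisible by some prime `p`, so `V` contains the groups of
order `p`; extending by central subgroups of order `p` puts every finite `p`-group in `V`, and
residual `p`-finiteness gives residual `V`-ness.
-/

/-- A class of finite groups. -/
def GroupClass : Type 1 := ∀ (G : Type) [Group G] [Finite G], Prop

/-- A pseudovariety of finite groups: closed under subgroups, quotients,
finite direct products (and isomorphism). -/
def IsPseudovariety (V : GroupClass) : Prop :=
  (∀ (G : Type) [Group G] [Finite G] (H : Subgroup G), V G → V H) ∧
  (∀ (G : Type) [Group G] [Finite G] (N : Subgroup G) [N.Normal], V G → V (G ⧸ N)) ∧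
  (∀ (G H : Type) [Group G] [Finite G] [Group H] [Finite H], V G → V H → V (G × H)) ∧
  (∀ (G H : Type) [Group G] [Finite G] [Group H] [Finite H], V G → (G ≃* H) → V H)

/-- `V` contains some nontrivial group. -/
def VNontrivial (V : GroupClass) : Prop :=
  ∃ (K : Type) (_ : Group K) (_ : Finite K), Nontrivial K ∧ V K

/-- `V` is closed under extensions. -/
def IsExtensionClosed (V : GroupClass) : Prop :=
  ∀ (G : Type) [Group G] [Finite G] (N : Subgroup G) [N.Normal],
    V N → V (G ⧸ N) → V G

/-- The closure of the subgroup `H` in the pro-`V` topology on `G`. -/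
def classClosure (V : GroupClass) {G : Type} [Group G] (H : Subgroup G) : Set G :=
  { x | ∀ (K : Type) [Group K] [Finite K] (φ : G →* K), V K → φ x ∈ H.map φ }

/-- `H` is closed in the pro-`V` topology on `G`. -/
def VClosed (V : GroupClass) {G : Type} [Group G] (H : Subgroup G) : Prop :=
  classClosure V H = (H : Set G)

namespace Units

variable {R : Type*} [Ring R] {a : R}

def oneAdd (ha : a * a = 0) : Rˣ where
  val := 1 + a
  inv := 1 - a
  val_inv := by noncomm_ring; simp [ha]
  inv_val := by noncomm_ring; simp [ha]

lemma val_oneAdd_zpow (ha : a * a = 0) (d : ℤ) : ((oneAdd ha ^ d : Rˣ) : R) = 1 + d • a := by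
  induction d using Int.induction_on with
  | zero => simp
  | succ i ih =>
    rw [zpow_add_one, val_mul, ih]
    change (1 + (i : ℤ) • a) * (1 + a) = _
    simp only [add_mul, mul_add, one_mul, mul_one, smul_mul_assoc, ha, smul_zero, add_smul,
      one_smul]
    abel
  | pred i ih =>
    rw [zpow_sub_one, val_mul, ih]
    change (1 + (-(i : ℤ)) • a) * (1 - a) = _
    simp only [sub_eq_add_neg, add_mul, mul_add, one_mul, mul_one, smul_mul_assoc, mul_neg, ha,
      smul_zero, add_zero, add_smul]
    abel

end Units

lemma Nat.prime_pow_dvd_choose_prime_pow_add {p : ℕ} (hp : p.Prime) (k : ℕ) {m i : ℕ}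
    (hi : i ≠ 0) (him : i < m) : p ^ k ∣ (p ^ (m + k)).choose i := by
  have hile : i ≤ p ^ (m + k) := (him.trans (Nat.lt_pow_self hp.one_lt)).le.trans
    (Nat.pow_le_pow_right hp.pos (Nat.le_add_right m k))
  rw [hp.pow_dvd_iff_le_factorization (Nat.choose_pos hile).ne',
    Nat.factorization_choose_prime_pow hp hile hi]
  have := Nat.factorization_lt p hi
  omega

theorem one_add_pow_prime_pow_eq_one {R : Type*} [Semiring R] {p k m : ℕ} (hp : p.Prime)
    (hR : ((p ^ k : ℕ) : R) = 0) {t : R} (ht : t ^ m = 0) : (1 + t) ^ p ^ (m + k) = 1 := by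
  rw [add_comm, (Commute.one_right t).add_pow, Finset.sum_eq_single 0]
  · simp
  · intro i _ hi
    rcases lt_or_ge i m with him | hmi
    · obtain ⟨c, hc⟩ := Nat.prime_pow_dvd_choose_prime_pow_add hp k hi him
      rw [hc, Nat.cast_mul, hR, zero_mul, mul_zero]
    · rw [pow_eq_zero_of_le hmi ht, zero_mul, zero_mul]
  · simp

namespace Matrix

variable {R : Type*} {n : ℕ}

def IsStrictlyUpperTriangular [Zero R] (M : Matrix (Fin n) (Fin n) R) : Prop :=
  ∀ i j, j ≤ i → M i j = 0

namespace IsStrictlyUpperTriangular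

variable {M N : Matrix (Fin n) (Fin n) R}

lemma zero [Zero R] : IsStrictlyUpperTriangular (0 : Matrix (Fin n) (Fin n) R) :=
  fun _ _ _ => rfl

lemma add [AddZeroClass R] (hM : M.IsStrictlyUpperTriangular) (hN : N.IsStrictlyUpperTriangular) :
    (M + N).IsStrictlyUpperTriangular := fun i j hji => by
  rw [add_apply, hM i j hji, hN i j hji, add_zero]

lemma neg [NegZeroClass R] (hM : M.IsStrictlyUpperTriangular) :
    (-M).IsStrictlyUpperTriangular := fun i j hji => by
  rw [neg_apply, hM i j hji, neg_zero]

lemma mul [NonUnitalNonAssocSemiring R] (hM : M.IsStrictlyUpperTriangular)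
    (hN : N.IsStrictlyUpperTriangular) :
    (M * N).IsStrictlyUpperTriangular := fun i j hji => by
  rw [mul_apply]
  refine Finset.sum_eq_zero fun l _ => ?_
  rcases le_or_gt l i with hli | hil
  · rw [hM i l hli, zero_mul]
  · rw [hN l j (hji.trans hil.le), mul_zero]

lemma pow_apply_eq_zero [Semiring R] (hM : M.IsStrictlyUpperTriangular) (k : ℕ) (i j : Fin n)
    (hij : (j : ℕ) < i + k) : (M ^ k) i j = 0 := by
  induction k generalizing j with
  | zero => exact one_apply_ne (by omega)
  | succ k ih =>
    rw [pow_succ, mul_apply]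
    refine Finset.sum_eq_zero fun l _ => ?_
    rcases lt_or_ge (l : ℕ) (i + k) with hl | hl
    · rw [ih l hl, zero_mul]
    · rw [hM l j (by omega), mul_zero]

lemma pow_eq_zero [Semiring R] (hM : M.IsStrictlyUpperTriangular) : M ^ n = 0 := by
  ext i j
  exact hM.pow_apply_eq_zero n i j (by omega)

end IsStrictlyUpperTriangular

theorem isPGroup_of_isStrictlyUpperTriangular_sub_one [Ring R] {p k : ℕ}
    (hp : p.Prime) (hR : ((p ^ k : ℕ) : R) = 0) (H : Subgroup (Matrix (Fin n) (Fin n) R)ˣ)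
    (hH : ∀ u ∈ H, ((u : Matrix (Fin n) (Fin n) R) - 1).IsStrictlyUpperTriangular) :
    IsPGroup p H := by
  rintro ⟨u, hu⟩
  refine ⟨n + k, Subtype.ext (Units.ext ?_)⟩
  have hR' : ((p ^ k : ℕ) : Matrix (Fin n) (Fin n) R) = 0 := by
    rw [← diagonal_natCast, hR, diagonal_zero]
  simpa using one_add_pow_prime_pow_eq_one hp hR' (hH u hu).pow_eq_zero

lemma list_prod_apply_eq_zero_of_lt [Semiring R] (Ms : List (Matrix (Fin n) (Fin n) R))
    (hMs : ∀ M ∈ Ms, ∀ i j : Fin n, (i : ℕ) + 1 < j → M i j = 0) (i j : Fin n)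
    (hij : (i : ℕ) + Ms.length < j) : Ms.prod i j = 0 := by
  induction Ms generalizing i with
  | nil => exact one_apply_ne (by simp at hij; omega)
  | cons M Ms ih =>
    rw [List.prod_cons, mul_apply]
    refine Finset.sum_eq_zero fun l _ => ?_
    rcases lt_or_ge (i + 1 : ℕ) l with hil | hli
    · rw [hMs M List.mem_cons_self i l hil, zero_mul]
    · rw [ih (fun M' hM' => hMs M' (List.mem_cons_of_mem _ hM')) l (by simp at hij; omega),
        mul_zero]

/-- The only path from `i` to `i + Ms.length` with steps of size at most one runs along the
superdiagonal. -/
lemma list_prod_apply_of_superdiagonal [Semiring R] (Ms : List (Matrix (Fin n) (Fin n) R))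
    (hMs : ∀ M ∈ Ms, ∀ i j : Fin n, (i : ℕ) + 1 < j → M i j = 0) (ds : List R)
    (hlen : ds.length = Ms.length) (i j : Fin n) (hij : (j : ℕ) = i + Ms.length)
    (hds : ∀ m (hm : m < Ms.length) (a b : Fin n), (a : ℕ) = i + m → (b : ℕ) = a + 1 →
      Ms[m] a b = ds[m]) :
    Ms.prod i j = ds.prod := by
  induction Ms generalizing ds i with
  | nil =>
    obtain rfl : j = i := Fin.ext (by simpa using hij)
    simp [List.length_eq_zero_iff.mp hlen]
  | cons M Ms ih =>
    obtain ⟨d, ds, rfl⟩ := List.exists_cons_of_length_eq_add_one hlen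
    have hMs' : ∀ M' ∈ Ms, ∀ i j : Fin n, (i : ℕ) + 1 < j → M' i j = 0 :=
      fun M' hM' => hMs M' (List.mem_cons_of_mem _ hM')
    let i' : Fin n := ⟨i + 1, by simp at hij; omega⟩
    rw [List.prod_cons, List.prod_cons, mul_apply, Finset.sum_eq_single i']
    · have hd : M i i' = d := hds 0 (by simp) i i' (by simp) rfl
      rw [hd, ih hMs' ds (by simpa using hlen) i' (by simp [i'] at hij ⊢; omega)]
      intro m hm a b ha hb
      exact hds (m + 1) (by simpa using hm) a b (by simp [i'] at ha ⊢; omega) hb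
    · intro l _ hl
      rcases lt_or_ge (i + 1 : ℕ) l with hil | hli
      · rw [hMs M List.mem_cons_self i l hil, zero_mul]
      · rw [list_prod_apply_eq_zero_of_lt Ms hMs' l j
          (by simp at hij; have : (l : ℕ) ≠ i + 1 := fun h => hl (Fin.ext h); omega), mul_zero]
    · simp

end Matrix

namespace FreeGroup

variable {α : Type*}

def syllableProd (L : List (α × ℤ)) : FreeGroup α :=
  (L.map fun y => of y.1 ^ y.2).prod

def IsSyllableForm (L : List (α × ℤ)) : Prop :=
  L.IsChain (fun y z => y.1 ≠ z.1) ∧ ∀ y ∈ L, y.2 ≠ 0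

lemma exists_syllableForm_zpow_mul (x : α) (d : ℤ) {L : List (α × ℤ)}
    (hL : IsSyllableForm L) :
    ∃ L', IsSyllableForm L' ∧ of x ^ d * syllableProd L = syllableProd L' := by
  obtain ⟨hchain, hne⟩ := hL
  rcases eq_or_ne d 0 with rfl | hd
  · exact ⟨L, ⟨hchain, hne⟩, by simp⟩
  match L, hchain, hne with
  | [], _, _ =>
    exact ⟨[(x, d)], ⟨List.isChain_singleton _, by simpa⟩, by simp [syllableProd]⟩
  | (a, e) :: T, hchain, hne =>
    have hT : IsSyllableForm T := ⟨hchain.tail, fun y hy => hne y (List.mem_cons_of_mem _ hy)⟩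
    by_cases hxa : x = a
    · subst hxa
      by_cases hde : d + e = 0
      · refine ⟨T, hT, ?_⟩
        simp [syllableProd, ← mul_assoc, ← zpow_add, hde]
      · refine ⟨(x, d + e) :: T, ⟨List.isChain_cons.mpr ⟨?_, hT.1⟩, ?_⟩, ?_⟩
        · exact (List.isChain_cons.mp hchain).1
        · simpa [hde] using hT.2
        · simp [syllableProd, ← mul_assoc, ← zpow_add]
    · refine ⟨(x, d) :: (a, e) :: T,
        ⟨List.isChain_cons_cons.mpr ⟨hxa, hchain⟩, ?_⟩, ?_⟩
      · simpa [hd] using hne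
      · simp [syllableProd]

lemma exists_syllableForm (g : FreeGroup α) : ∃ L, IsSyllableForm L ∧ syllableProd L = g := by
  have hmul : ∀ L, IsSyllableForm L →
      ∃ L', IsSyllableForm L' ∧ g * syllableProd L = syllableProd L' := by
    induction g using FreeGroup.induction_on with
    | C1 => exact fun L hL => ⟨L, hL, one_mul _⟩
    | of x => simpa using fun L => exists_syllableForm_zpow_mul (L := L) x 1
    | inv_of x _ => simpa using fun L => exists_syllableForm_zpow_mul (L := L) x (-1)
    | mul g h ihg ihh =>
      intro L hL
      obtain ⟨L', hL', hh⟩ := ihh L hL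
      obtain ⟨L'', hL'', hg⟩ := ihg L' hL'
      exact ⟨L'', hL'', by rw [mul_assoc, hh, hg]⟩
  obtain ⟨L, hL, hg⟩ := hmul [] ⟨List.isChain_nil, by simp⟩
  exact ⟨L, hL, by simpa [syllableProd] using hg.symm⟩

end FreeGroup

section LetterMatrix

open Matrix

variable {α R : Type*} [DecidableEq α]

def letterMatrix [Zero R] [One R] (w : List α) (x : α) :
    Matrix (Fin (w.length + 1)) (Fin (w.length + 1)) R :=
  of fun i j => if (j : ℕ) = i + 1 ∧ w[(i : ℕ)]? = some x then 1 else 0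

variable (w : List α) (x : α)

lemma letterMatrix_isStrictlyUpperTriangular [Zero R] [One R] :
    (letterMatrix (R := R) w x).IsStrictlyUpperTriangular := fun i j hji => by
  rw [letterMatrix, of_apply, if_neg]
  rintro ⟨h, -⟩
  omega

lemma letterMatrix_apply_of_add_one_lt [Zero R] [One R] {i j : Fin (w.length + 1)}
    (hij : (i : ℕ) + 1 < j) : letterMatrix (R := R) w x i j = 0 := by
  rw [letterMatrix, of_apply, if_neg]
  rintro ⟨h, -⟩
  omega

lemma letterMatrix_apply_add_one [Zero R] [One R] {i j : Fin (w.length + 1)}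
    (hij : (j : ℕ) = i + 1) (hx : w[(i : ℕ)]? = some x) :
    letterMatrix (R := R) w x i j = 1 := by
  simp [letterMatrix, hij, hx]

lemma letterMatrix_mul_self [NonAssocSemiring R] (hw : w.IsChain (· ≠ ·)) :
    letterMatrix (R := R) w x * letterMatrix w x = 0 := by
  ext i k
  rw [mul_apply]
  refine Finset.sum_eq_zero fun j _ => ?_
  simp only [letterMatrix, of_apply, ite_mul, one_mul, zero_mul]
  refine ite_eq_right_iff.mpr fun hij => ite_eq_right_iff.mpr fun hjk => (?_ : False).elim
  obtain ⟨hi, hwi⟩ := List.getElem?_eq_some_iff.mp hij.2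
  obtain ⟨hj, hwj⟩ := List.getElem?_eq_some_iff.mp hjk.2
  simp only [hij.1] at hj hwj
  exact List.isChain_iff_getElem.mp hw i hj (hwi.trans hwj.symm)

variable [Ring R] {w}

def letterRep (hw : w.IsChain (· ≠ ·)) :
    FreeGroup α →* (Matrix (Fin (w.length + 1)) (Fin (w.length + 1)) R)ˣ :=
  FreeGroup.lift fun x => Units.oneAdd (letterMatrix_mul_self w x hw)

lemma letterRep_sub_one_isStrictlyUpperTriangular (hw : w.IsChain (· ≠ ·)) (g : FreeGroup α) :
    ((letterRep (R := R) hw g).val - 1).IsStrictlyUpperTriangular := by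
  induction g using FreeGroup.induction_on with
  | C1 => simpa using IsStrictlyUpperTriangular.zero
  | of x =>
    simpa [letterRep, Units.oneAdd] using letterMatrix_isStrictlyUpperTriangular w x
  | inv_of x _ =>
    simpa [letterRep, Units.oneAdd] using (letterMatrix_isStrictlyUpperTriangular w x).neg
  | mul g h hg hh =>
    have hsub : (letterRep (R := R) hw (g * h)).val - 1 =
        ((letterRep hw g).val - 1) * ((letterRep hw h).val - 1) +
          ((letterRep hw g).val - 1) + ((letterRep hw h).val - 1) := by
      rw [map_mul, Units.val_mul]; noncomm_ring
    rw [hsub]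
    exact ((hg.mul hh).add hg).add hh

lemma letterRep_syllableProd_apply_zero_last {L : List (α × ℤ)}
    (hw : (L.map Prod.fst).IsChain (· ≠ ·)) :
    (letterRep (R := R) hw (FreeGroup.syllableProd L)).val 0 (Fin.last _) =
      ((L.map Prod.snd).prod : R) := by
  have hprod : (letterRep (R := R) hw (FreeGroup.syllableProd L)).val =
      (L.map fun y => 1 + y.2 • letterMatrix (L.map Prod.fst) y.1).prod := by
    rw [FreeGroup.syllableProd, map_list_prod, ← Units.coeHom_apply, map_list_prod, List.map_map,
      List.map_map]
    congr 1
    refine List.map_congr_left fun y _ => ?_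
    simp [letterRep, Units.val_oneAdd_zpow]
  rw [hprod, Int.cast_list_prod, List.map_map]
  refine list_prod_apply_of_superdiagonal _ ?_ _ (by simp) _ _ (by simp) ?_
  · simp only [List.mem_map]
    rintro _ ⟨y, -, rfl⟩ i j hij
    rw [Matrix.add_apply, Matrix.smul_apply, one_apply_ne (fun h => by subst h; omega),
      letterMatrix_apply_of_add_one_lt _ _ hij, smul_zero, zero_add]
  · intro m hm a b ha hb
    have hm' : m < L.length := by simpa using hm
    rw [List.getElem_map, List.getElem_map, Matrix.add_apply, Matrix.smul_apply,
      one_apply_ne (fun h => by subst h; omega),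
      letterMatrix_apply_add_one _ _ hb (by simp [ha, List.getElem?_eq_getElem hm'])]
    simp

end LetterMatrix

theorem FreeGroup.exists_surjective_isPGroup_ne_one {α : Type} {p : ℕ} (hp : p.Prime)
    {g : FreeGroup α} (hg : g ≠ 1) :
    ∃ (K : Type) (_ : Group K) (_ : Finite K) (φ : FreeGroup α →* K),
      Function.Surjective φ ∧ IsPGroup p K ∧ φ g ≠ 1 := by
  classical
  obtain ⟨L, ⟨hchain, hne⟩, rfl⟩ := exists_syllableForm g
  have hL : L ≠ [] := by rintro rfl; exact hg rfl
  have hw : (L.map Prod.fst).IsChain (· ≠ ·) := (List.isChain_map _).mpr hchain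
  set D := (L.map Prod.snd).prod
  have hD : D ≠ 0 := List.prod_ne_zero (by simpa using fun x hx => hne (x, 0) hx rfl)
  let k := D.natAbs
  have : NeZero (p ^ k) := ⟨pow_ne_zero _ hp.ne_zero⟩
  have hDk : (D : ZMod (p ^ k)) ≠ 0 := by
    rw [Ne, ZMod.intCast_zmod_eq_zero_iff_dvd, ← Int.natAbs_dvd_natAbs, Int.natAbs_natCast]
    exact Nat.not_dvd_of_pos_of_lt (Int.natAbs_pos.mpr hD) (Nat.lt_pow_self hp.one_lt)
  let ρ := letterRep (R := ZMod (p ^ k)) hw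
  refine ⟨ρ.range, inferInstance, inferInstance, ρ.rangeRestrict, ρ.rangeRestrict_surjective,
    Matrix.isPGroup_of_isStrictlyUpperTriangular_sub_one hp (ZMod.natCast_self _) _ ?_, ?_⟩
  · rintro _ ⟨h, rfl⟩
    exact letterRep_sub_one_isStrictlyUpperTriangular hw h
  · intro h1
    have hρ : ρ (syllableProd L) = 1 := by simpa using congrArg Subtype.val h1
    have hcorner := letterRep_syllableProd_apply_zero_last (R := ZMod (p ^ k)) hw
    rw [hρ, Units.val_one, Matrix.one_apply_ne (by simpa [Fin.ext_iff, eq_comm] using hL)]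
      at hcorner
    exact hDk hcorner.symm

lemma Subgroup.normal_of_le_center {G : Type*} [Group G] {H : Subgroup G}
    (hH : H ≤ Subgroup.center G) : H.Normal :=
  ⟨fun n hn g => by rwa [(Subgroup.mem_center_iff.mp (hH hn) g), mul_inv_cancel_right]⟩

namespace IsPseudovariety

variable {V : GroupClass} {K : Type} [Group K] [Finite K]

lemma mem_of_subsingleton (hV : IsPseudovariety V) (hK : V K) (G : Type) [Group G] [Finite G]
    [Subsingleton G] : V G :=
  have : Unique G := uniqueOfSubsingleton 1
  hV.2.2.2 _ _ (hV.1 K ⊥ hK) MulEquiv.ofUnique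

lemma mem_of_card_eq_prime (hV : IsPseudovariety V) (hK : V K) {p : ℕ} [Fact p.Prime]
    (hpK : p ∣ Nat.card K) (G : Type) [Group G] [Finite G] (hG : Nat.card G = p) : V G := by
  obtain ⟨x, hx⟩ := exists_prime_orderOf_dvd_card' p hpK
  exact hV.2.2.2 _ _ (hV.1 K (Subgroup.zpowers x) hK)
    (mulEquivOfPrimeCardEq (by rw [Nat.card_zpowers, hx]) hG)

lemma mem_of_isPGroup (hV : IsPseudovariety V) (hec : IsExtensionClosed V) (hK : V K) {p : ℕ}
    [Fact p.Prime] (hpK : p ∣ Nat.card K) (G : Type) [Group G] [Finite G] (hG : IsPGroup p G) :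
    V G := by
  induction hn : Nat.card G using Nat.strong_induction_on generalizing G with
  | _ n ih =>
    rcases subsingleton_or_nontrivial G with hG1 | hG1
    · exact hV.mem_of_subsingleton hK G
    have := hG.center_nontrivial
    obtain ⟨z, hz⟩ : ∃ z : Subgroup.center G, orderOf z = p :=
      exists_prime_orderOf_dvd_card' p
        ((hG.to_subgroup _).card_eq_or_dvd.resolve_left Finite.one_lt_card.ne')
    let N := Subgroup.zpowers (z : G)
    have : N.Normal := Subgroup.normal_of_le_center (Subgroup.zpowers_le.mpr z.2)
    have hN : Nat.card N = p := by rw [Nat.card_zpowers, Subgroup.orderOf_coe, hz]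
    have hcard : Nat.card (G ⧸ N) < n := by
      have := (Fact.out : p.Prime).one_lt
      rw [← hn, N.card_eq_card_quotient_mul_card_subgroup, hN]
      exact lt_mul_right Nat.card_pos this
    exact hec G N (hV.mem_of_card_eq_prime hK hpK N hN) (ih _ hcard _ (hG.to_quotient N) rfl)

end IsPseudovariety

theorem free_residually_V (V : GroupClass) (hps : IsPseudovariety V)
    (hec : IsExtensionClosed V) (hnt : VNontrivial V) :
    (∀ (α : Type) (g : FreeGroup α), g ≠ 1 →
      ∃ (K : Type) (_ : Group K) (_ : Finite K) (φ : FreeGroup α →* K),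
        Function.Surjective φ ∧ V K ∧ φ g ≠ 1) ∧
    (∀ (p : ℕ), p.Prime → ∀ (α : Type) (g : FreeGroup α), g ≠ 1 →
      ∃ (K : Type) (_ : Group K) (_ : Finite K) (φ : FreeGroup α →* K),
        Function.Surjective φ ∧ IsPGroup p K ∧ φ g ≠ 1) := by
  obtain ⟨K, _, _, _, hK⟩ := hnt
  obtain ⟨p, hp, hpK⟩ := Nat.exists_prime_and_dvd (Finite.one_lt_card.ne' : Nat.card K ≠ 1)
  have : Fact p.Prime := ⟨hp⟩
  refine ⟨fun α g hg => ?_,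
    fun q hq α g hg => FreeGroup.exists_surjective_isPGroup_ne_one hq hg⟩
  obtain ⟨G, _, _, φ, hφ, hG, hφg⟩ := FreeGroup.exists_surjective_isPGroup_ne_one hp hg
  exact ⟨G, _, _, φ, hφ, hps.mem_of_isPGroup hec hK hpK G hG, hφg⟩
end

section
/- Let G be a group that is residually V, let K ≤ G be a retract of G, and let H ≤ K. Then the closure of H in the pro-V topology of G equals the closure of H in the pro-V topology of K. -/
/-- `G` is residually `V`: the trivial subgroup is closed in the pro-`V` topology. -/
def ResiduallyV (V : GroupClass) (G : Type) [Group G] : Prop :=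
  classClosure V (⊥ : Subgroup G) = ((⊥ : Subgroup G) : Set G)

/-!
Pushing forward along the inclusion `K → G` maps the pro-`V` closure of `H` in `K` into its
closure in `G`. Conversely, `id` and `r` agree on `H`; since `V` is closed under products, two
homomorphisms into the residually `V` group `G` that agree on `H` agree on its closure, so every
`x` in the closure of `H` in `G` is fixed by `r` and lies in `K`. Pushing `x` forward along the
retraction `G → K`, which is the identity on `H`, puts it in the closure of `H` in `K`.
-/

variable {V : GroupClass}

theorem map_mem_classClosure_map {G G' : Type} [Group G] [Group G'] (f : G →* G')
    {H : Subgroup G} {x : G} (hx : x ∈ classClosure V H) :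
    f x ∈ classClosure V (H.map f) := by
  intro L _ _ φ hV
  rw [Subgroup.map_map]
  exact hx L (φ.comp f) hV

theorem ResiduallyV.eq_of_forall_map_eq {G : Type} [Group G] (hres : ResiduallyV V G)
    {x y : G} (h : ∀ (L : Type) [Group L] [Finite L] (φ : G →* L), V L → φ x = φ y) :
    x = y := by
  have hmem : x⁻¹ * y ∈ classClosure V (⊥ : Subgroup G) := fun L _ _ φ hV => by
    simp [h L φ hV]
  rw [hres] at hmem
  exact inv_mul_eq_one.mp (Subgroup.mem_bot.mp hmem)

theorem ResiduallyV.eqOn_classClosure {G G' : Type} [Group G] [Group G']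
    (hprod : ∀ (L M : Type) [Group L] [Finite L] [Group M] [Finite M],
      V L → V M → V (L × M))
    (hres : ResiduallyV V G') {f g : G →* G'} {H : Subgroup G} (hfg : Set.EqOn f g H) :
    Set.EqOn f g (classClosure V H) := by
  intro x hx
  refine hres.eq_of_forall_map_eq fun L _ _ φ hV => ?_
  obtain ⟨h, hh, hφ⟩ := hx (L × L) ((φ.comp f).prod (φ.comp g)) (hprod L L hV hV)
  have hf : φ (f h) = φ (f x) := congrArg Prod.fst hφ
  have hg : φ (g h) = φ (g x) := congrArg Prod.snd hφ
  rw [← hf, ← hg, hfg hh]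

theorem Subgroup.map_codRestrict_eq_subgroupOf {G : Type} [Group G] {K H : Subgroup G}
    {r : G →* G} (hrange : ∀ g : G, r g ∈ K) (hfix : ∀ h ∈ H, r h = h) :
    H.map (r.codRestrict K hrange) = H.subgroupOf K := by
  ext ⟨k, hk⟩
  simp only [Subgroup.mem_map, Subgroup.mem_subgroupOf, Subtype.ext_iff,
    MonoidHom.codRestrict_apply]
  exact ⟨fun ⟨h, hh, hrh⟩ => by rwa [← hrh, hfix h hh], fun hk' => ⟨k, hk', hfix k hk'⟩⟩

theorem closure_in_retract (V : GroupClass) (hps : IsPseudovariety V)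
    (G : Type) [Group G] (hres : ResiduallyV V G)
    (K : Subgroup G) (r : G →* G) (hrange : ∀ g : G, r g ∈ K)
    (hfix : ∀ k ∈ K, r k = k)
    (H : Subgroup G) (hHK : H ≤ K) :
    classClosure V H = Subtype.val '' classClosure V (H.subgroupOf K) := by
  have hfixH : ∀ h ∈ H, r h = h := fun h hh => hfix h (hHK hh)
  ext x
  constructor
  · intro hx
    have hrx : x = r x := hres.eqOn_classClosure hps.2.2.1 (f := MonoidHom.id G)
      (fun h hh => (hfixH h hh).symm) hx
    have hxK : x ∈ K := hrx ▸ hrange x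
    refine ⟨⟨x, hxK⟩, ?_, rfl⟩
    have hrx' : r.codRestrict K hrange x = ⟨x, hxK⟩ := Subtype.ext hrx.symm
    rw [← hrx', ← Subgroup.map_codRestrict_eq_subgroupOf hrange hfixH]
    exact map_mem_classClosure_map _ hx
  · rintro ⟨k, hk, rfl⟩
    rw [← Subgroup.map_subgroupOf_eq_of_le hHK]
    exact map_mem_classClosure_map K.subtype hk
end
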